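/- arXiv:2001.09013 — 4 statements merged into one kernel-verified Lean document; each statement's English description precedes it below -/
import Mathlib

section
/- Let m ≥ 0, β ≥ 0, δ̃ ≥ 0, and z ∈ Q. Let ψ : E → ℝ be convex and m-strongly convex relative to d on Q, and let y ∈ Q be a δ̃-approximate minimizer of the function x ↦ ψ(x) + β·V[z](x) on Q. Then for all x ∈ Q: ψ(x) + β·V[z](x) ≥ ψ(y) + β·V[z](y) + (β + m)·V[y](x) − δ̃. -/
/-! The subgradient `h` of `ψ + β V[z]` at `y` witnessing approximate optimality yields, after
removing the gradient `β (∇d(y) - ∇d(z))` of the smooth part, a subgradient of `ψ` at `y`.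
Relative strong convexity of `ψ` at `y`, the bound `⟪h, x - y⟫ ≥ -δ̃` and the three-point
identity `V[z](x) = V[z](y) + ⟪∇d(y) - ∇d(z), x - y⟫ + V[y](x)` then add up to the claim. -/

open RealInnerProductSpace Finset

/-- The Bregman divergence `V[y](x) = d(x) - d(y) - ⟪∇d(y), x - y⟫` generated by `d`
with gradient map `Dd`. -/
noncomputable def breg {E : Type*} [NormedAddCommGroup E] [InnerProductSpace ℝ E]
    (d : E → ℝ) (Dd : E → E) (y x : E) : ℝ :=
  d x - d y - ⟪Dd y, x - y⟫

/-- `g` is a subgradient of `ψ` at `z` (relative to the set `Q`). -/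
def IsSubgradOn {E : Type*} [NormedAddCommGroup E] [InnerProductSpace ℝ E]
    (Q : Set E) (ψ : E → ℝ) (z g : E) : Prop :=
  ∀ x ∈ Q, ψ z + ⟪g, x - z⟫ ≤ ψ x

/-- `ψ` is `m`-strongly convex relative to `d` on `Q`, where `V` is the Bregman
divergence generated by `d`. -/
def StrongRelConvexOn {E : Type*} [NormedAddCommGroup E] [InnerProductSpace ℝ E]
    (Q : Set E) (V : E → E → ℝ) (m : ℝ) (ψ : E → ℝ) : Prop :=
  ∀ z ∈ Q, ∀ g : E, IsSubgradOn Q ψ z g → ∀ x ∈ Q, ψ z + ⟪g, x - z⟫ + m * V z x ≤ ψ x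

/-- `y` is a `δ`-approximate minimizer of `Ψ` on `Q`: there exists a subgradient `h`
of `Ψ` at `y` such that `⟪h, x - y⟫ ≥ -δ` for all `x ∈ Q`. -/
def IsApproxMinOn {E : Type*} [NormedAddCommGroup E] [InnerProductSpace ℝ E]
    (Q : Set E) (Ψ : E → ℝ) (δ : ℝ) (y : E) : Prop :=
  y ∈ Q ∧ ∃ h : E, IsSubgradOn Q Ψ y h ∧ ∀ x ∈ Q, -δ ≤ ⟪h, x - y⟫

open Filter Topology

theorem ConvexOn.le_add_smul_sub {E : Type*} [AddCommGroup E] [Module ℝ E] {Q : Set E} {ψ : E → ℝ}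
    (hψ : ConvexOn ℝ Q ψ) {x y : E} (hx : x ∈ Q) (hy : y ∈ Q) {t : ℝ} (ht₀ : 0 ≤ t) (ht₁ : t ≤ 1) :
    ψ (y + t • (x - y)) ≤ ψ y + t * (ψ x - ψ y) := by
  have h := hψ.2 hy hx (sub_nonneg.2 ht₁) ht₀ (sub_add_cancel 1 t)
  rw [show (1 - t) • y + t • x = y + t • (x - y) by module, smul_eq_mul, smul_eq_mul] at h
  linarith

theorem IsSubgradOn.sub_of_hasGradientAt {E : Type*} [NormedAddCommGroup E] [InnerProductSpace ℝ E]
    [CompleteSpace E] {Q : Set E} (hQ : Convex ℝ Q) {ψ φ : E → ℝ} (hψ : ConvexOn ℝ Q ψ)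
    {y h w : E} (hy : y ∈ Q) (hφ : HasGradientAt φ w y)
    (hh : IsSubgradOn Q (fun x => ψ x + φ x) y h) :
    IsSubgradOn Q ψ y (h - w) := by
  intro x hx
  have hslope : Tendsto (fun t : ℝ => t⁻¹ • (φ (y + t • (x - y)) - φ y)) (𝓝[>] 0)
      (𝓝 ⟪w, x - y⟫) :=
    (hφ.hasFDerivAt.hasLineDerivAt (x - y)).tendsto_slope_zero_right
  have hbound : ∀ᶠ t in 𝓝[>] (0 : ℝ),
      ⟪h, x - y⟫ - (ψ x - ψ y) ≤ t⁻¹ • (φ (y + t • (x - y)) - φ y) := by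
    filter_upwards [Ioc_mem_nhdsGT zero_lt_one] with t ⟨ht₀, ht₁⟩
    have hsub := hh _ (hQ.add_smul_sub_mem hy hx ⟨ht₀.le, ht₁⟩)
    have hconv := hψ.le_add_smul_sub hx hy ht₀.le ht₁
    rw [add_sub_cancel_left, real_inner_smul_right] at hsub
    rw [smul_eq_mul, le_inv_mul_iff₀ ht₀]
    linarith
  have hlimit := ge_of_tendsto hslope hbound
  rw [inner_sub_left]
  linarith

theorem HasGradientAt.const_mul {E : Type*} [NormedAddCommGroup E] [InnerProductSpace ℝ E]
    [CompleteSpace E] {f : E → ℝ} {w y : E} (hf : HasGradientAt f w y) (c : ℝ) :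
    HasGradientAt (fun x => c * f x) (c • w) y := by
  refine (hf.hasFDerivAt.const_mul c).congr_fderiv ?_
  ext v
  simp

section Bregman

variable {E : Type*} [NormedAddCommGroup E] [InnerProductSpace ℝ E] {d : E → ℝ} {Dd : E → E}

theorem breg_three_point (x y z : E) :
    breg d Dd z x = breg d Dd z y + ⟪Dd y - Dd z, x - y⟫ + breg d Dd y x := by
  simp only [breg, inner_sub_left, inner_sub_right]
  ring

theorem hasGradientAt_breg [CompleteSpace E] {y : E} (hd : HasGradientAt d (Dd y) y) (z : E) :
    HasGradientAt (breg d Dd z) (Dd y - Dd z) y := by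
  have hlin : HasFDerivAt (fun x => ⟪Dd z, x - z⟫) (innerSL ℝ (Dd z)) y :=
    (innerSL ℝ (Dd z)).hasFDerivAt.comp y ((hasFDerivAt_id y).sub_const z)
  refine ((hd.hasFDerivAt.sub_const (d z)).sub hlin).congr_fderiv ?_
  ext v
  simp

end Bregman

theorem stmt0_general
    {E : Type*} [NormedAddCommGroup E] [InnerProductSpace ℝ E] [FiniteDimensional ℝ E]
    (Q : Set E) (hQ : Convex ℝ Q)
    (d : E → ℝ) (Dd : E → E)
    (hd_diff : ∀ x, HasGradientAt d (Dd x) x)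
    (m β δt : ℝ)
    (z : E)
    (ψ : E → ℝ) (hψ_conv : ConvexOn ℝ Q ψ)
    (hψ_strong : StrongRelConvexOn Q (breg d Dd) m ψ)
    (y : E)
    (hy : IsApproxMinOn Q (fun x => ψ x + β * breg d Dd z x) δt y) :
    ∀ x ∈ Q,
      ψ y + β * breg d Dd z y + (β + m) * breg d Dd y x - δt ≤ ψ x + β * breg d Dd z x := by
  obtain ⟨hyQ, h, hh, hh_approx⟩ := hy
  have hg : IsSubgradOn Q ψ y (h - β • (Dd y - Dd z)) :=
    hh.sub_of_hasGradientAt hQ hψ_conv hyQ ((hasGradientAt_breg (hd_diff y) z).const_mul β)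
  intro x hx
  have hstrong := hψ_strong y hyQ _ hg x hx
  have happrox := hh_approx x hx
  rw [inner_sub_left, real_inner_smul_left] at hstrong
  rw [breg_three_point x y z]
  linarith

/-- Lemma 3.2: if `ψ` is convex and `m`-strongly convex relative to `d`
on `Q` and `y` is a `δ̃`-approximate minimizer of `x ↦ ψ(x) + β·V[z](x)` on `Q`, then
`ψ(x) + β·V[z](x) ≥ ψ(y) + β·V[z](y) + (β + m)·V[y](x) − δ̃` for all `x ∈ Q`. -/
theorem stmt0
    {E : Type*} [NormedAddCommGroup E] [InnerProductSpace ℝ E] [FiniteDimensional ℝ E]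
    (Q : Set E) (hQ : Convex ℝ Q)
    (d : E → ℝ) (Dd : E → E)
    (hd_conv : ConvexOn ℝ Set.univ d) (hd_diff : ∀ x, HasGradientAt d (Dd x) x)
    (m β δt : ℝ) (hm : 0 ≤ m) (hβ : 0 ≤ β) (hδt : 0 ≤ δt)
    (z : E) (hz : z ∈ Q)
    (ψ : E → ℝ) (hψ_conv : ConvexOn ℝ Q ψ)
    (hψ_strong : StrongRelConvexOn Q (breg d Dd) m ψ)
    (y : E)
    (hy : IsApproxMinOn Q (fun x => ψ x + β * breg d Dd z x) δt y) :
    ∀ x ∈ Q,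
      ψ y + β * breg d Dd z y + (β + m) * breg d Dd y x - δt ≤ ψ x + β * breg d Dd z x :=
  stmt0_general Q hQ d Dd hd_diff m β δt z ψ hψ_conv hψ_strong y hy
end

section
/- Let μ, m ≥ 0, N ≥ 1, and let sequences x_k, u_k, y_{k+1} ∈ Q, A_k, α_{k+1}, L_{k+1}, δ_k, δ̃_k (k = 0, …, N−1) be generated by the fast adaptive gradient method: A₀ = 0, u₀ = x₀, α_{k+1} > 0, A_{k+1} = A_k + α_{k+1}, A_{k+1}·(1 + A_k·μ + A_k·m) = L_{k+1}·α_{k+1}², y_{k+1} = (α_{k+1}·u_k + A_k·x_k)/A_{k+1}, x_{k+1} = (α_{k+1}·u_{k+1} + A_k·x_k)/A_{k+1}, where at each step conditions (a)–(e) of the per-iteration lemma hold (a (δ_k, L_{k+1}, μ, m, V, ‖·‖)-model of f at y_{k+1} with inexact line search, u_{k+1} a δ̃_k-approximate minimizer of the auxiliary problem, and d 1-strongly convex with respect to ‖·‖). Let x⋆ ∈ Q be a minimizer of f on Q. Then: (i) f(x_N) − f(x⋆) ≤ V[u₀](x⋆)/A_N + (2·∑_{k=0}^{N−1} A_{k+1}·δ_k)/A_N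 + (∑_{k=0}^{N−1} δ̃_k)/A_N; and (ii) V[u_N](x⋆) ≤ (V[u₀](x⋆) + 2·∑_{k=0}^{N−1} A_{k+1}·δ_k + ∑_{k=0}^{N−1} δ̃_k)/(1 + A_N·μ + A_N·m). -/
/-!
Each iteration decreases the potential
`Φ k = A k * (f (x k) - f xs) + (1 + A k * μ + A k * m) * V[u k](xs)`
up to the error `2 * A (k + 1) * δs k + δts k`. The auxiliary function minimized by `u (k + 1)` is
`α ψ` plus `(1 + A k * μ + A k * m + α μ) • d` plus an affine function, hence
`(1 + A (k + 1) * μ + A (k + 1) * m)`-strongly convex relative to `d`, so approximate minimality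
bounds it at `u (k + 1)`. Convexity of `ψ` carries this bound to `x (k + 1)`, and the choice of
`α (k + 1)` makes the term `L / 2 * ‖x (k + 1) - y (k + 1)‖ ^ 2` exactly absorbable by
`V[u k](u (k + 1))`. Summing the potential inequalities gives both bounds.
-/

open RealInnerProductSpace Finset

theorem breg_nonneg {E : Type*} [NormedAddCommGroup E] [InnerProductSpace ℝ E] {Q : Set E}
    {d : E → ℝ} {Dd : E → E} (hsc : ∀ a ∈ Q, ∀ b ∈ Q, 1 / 2 * ‖a - b‖ ^ 2 ≤ breg d Dd b a)
    {a b : E} (ha : a ∈ Q) (hb : b ∈ Q) : 0 ≤ breg d Dd b a :=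
  (by positivity : (0 : ℝ) ≤ 1 / 2 * ‖a - b‖ ^ 2).trans (hsc a ha b hb)

theorem IsApproxMinOn.add_mul_le_add {E : Type*} [NormedAddCommGroup E] [InnerProductSpace ℝ E]
    {Q : Set E} {Ψ : E → ℝ} {V : E → E → ℝ} {M δ : ℝ} {z : E} (hz : IsApproxMinOn Q Ψ δ z)
    (hΨ : StrongRelConvexOn Q V M Ψ) : ∀ w ∈ Q, Ψ z + M * V z w ≤ Ψ w + δ := by
  obtain ⟨hzQ, h, hsub, hh⟩ := hz
  intro w hw
  linarith [hΨ z hzQ h hsub w hw, hh w hw]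

section Subgradient

variable {E : Type*} [NormedAddCommGroup E] [InnerProductSpace ℝ E] [CompleteSpace E]
  {Q : Set E} {φ d : E → ℝ} {z G h : E}

/- Along the segment from `z` to `w`, convexity of `φ` bounds its slope by `φ w - φ z`, while the
slope of `d` tends to `⟪G, w - z⟫`. -/
theorem IsSubgradOn.sub_smul_of_hasGradientAt (hφ : ConvexOn ℝ Q φ) (hz : z ∈ Q)
    (hd : HasGradientAt d G z) (c : ℝ) (hsub : IsSubgradOn Q (fun w => φ w + c * d w) z h) :
    IsSubgradOn Q φ z (h - c • G) := by
  intro w hw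
  have hslope : Filter.Tendsto (fun t : ℝ => c * (t⁻¹ • (d (z + t • (w - z)) - d z)))
      (nhdsWithin 0 (Set.Ioi 0)) (nhds (c * ⟪G, w - z⟫)) := by
    simpa using ((hd.hasFDerivAt.hasLineDerivAt (w - z)).tendsto_slope_zero_right).const_mul c
  have hbound : ∀ t ∈ Set.Ioc (0 : ℝ) 1,
      ⟪h, w - z⟫ - c * (t⁻¹ • (d (z + t • (w - z)) - d z)) ≤ φ w - φ z := by
    rintro t ⟨ht0, ht1⟩
    have hzt : z + t • (w - z) = (1 - t) • z + t • w := by module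
    have hconv := hφ.2 hz hw (sub_nonneg.mpr ht1) ht0.le (sub_add_cancel 1 t)
    have hsub_t := hsub _ (hzt ▸ hφ.1 hz hw (sub_nonneg.mpr ht1) ht0.le (sub_add_cancel 1 t))
    rw [← hzt, smul_eq_mul, smul_eq_mul] at hconv
    simp only [add_sub_cancel_left, real_inner_smul_right] at hsub_t
    rw [smul_eq_mul, sub_le_iff_le_add, ← sub_le_iff_le_add',
      ← mul_le_mul_iff_of_pos_left ht0]
    field_simp
    nlinarith
  have := le_of_tendsto (hslope.const_sub ⟪h, w - z⟫)
    (Filter.eventually_of_mem (Ioc_mem_nhdsGT zero_lt_one) hbound)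
  rw [inner_sub_left, real_inner_smul_left]
  linarith

theorem StrongRelConvexOn.mul_add_affine_add_mul {Dd : E → E} {ψ : E → ℝ} {m a : ℝ}
    (hQ : Convex ℝ Q) (hd : ∀ z ∈ Q, HasGradientAt d (Dd z) z) (hψ : ConvexOn ℝ Q ψ)
    (hψm : StrongRelConvexOn Q (breg d Dd) m ψ) (ha : 0 < a) (v : E) (r c : ℝ) :
    StrongRelConvexOn Q (breg d Dd) (a * m + c) (fun w => a * ψ w + (⟪v, w⟫ + r) + c * d w) := by
  intro z hz h hsub w hw
  have hφ : ConvexOn ℝ Q (fun w => a * ψ w + (⟪v, w⟫ + r)) :=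
    (hψ.smul ha.le).add (((innerₛₗ ℝ v).convexOn hQ).add_const r)
  have hφsub := hsub.sub_smul_of_hasGradientAt hφ hz (hd z hz) c
  have hψsub : IsSubgradOn Q ψ z (a⁻¹ • (h - c • Dd z - v)) := by
    intro x hx
    have := hφsub x hx
    simp only [inner_sub_left, real_inner_smul_left, inner_sub_right] at this ⊢
    rw [← mul_le_mul_iff_of_pos_left ha]
    field_simp
    linarith
  have := hψm z hz _ hψsub w hw
  simp only [breg, inner_sub_left, real_inner_smul_left, inner_sub_right] at this ⊢
  rw [← mul_le_mul_iff_of_pos_left ha] at this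
  field_simp at this
  linarith

theorem strongRelConvexOn_mul_add_mul_breg_add_mul_breg {Dd : E → E} {ψ : E → ℝ}
    {m α β μ : ℝ} (hQ : Convex ℝ Q) (hd : ∀ z ∈ Q, HasGradientAt d (Dd z) z)
    (hψ : ConvexOn ℝ Q ψ) (hψm : StrongRelConvexOn Q (breg d Dd) m ψ) (hα : 0 < α) (p q : E) :
    StrongRelConvexOn Q (breg d Dd) (β + α * μ + α * m)
      (fun w => α * ψ w + β * breg d Dd p w + α * μ * breg d Dd q w) := by
  have hΨ := hψm.mul_add_affine_add_mul hQ hd hψ hα (-(β • Dd p + (α * μ) • Dd q))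
    (β * (⟪Dd p, p⟫ - d p) + α * μ * (⟪Dd q, q⟫ - d q)) (β + α * μ)
  convert hΨ using 1
  · ring
  · funext w
    simp only [breg, inner_neg_left, inner_add_left, real_inner_smul_left, inner_sub_right]
    ring

end Subgradient

section ConvexCombination

variable {E : Type*} [AddCommGroup E] [Module ℝ E] {Q : Set E} {a b : ℝ} {p q : E}

theorem Convex.inv_add_smul_add_mem (hQ : Convex ℝ Q) (hp : p ∈ Q) (hq : q ∈ Q) (ha : 0 ≤ a)
    (hb : 0 ≤ b) (hab : 0 < a + b) : (a + b)⁻¹ • (a • p + b • q) ∈ Q := by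
  convert convex_iff_div.1 hQ hp hq ha hb hab using 1
  simp only [smul_add, smul_smul, div_eq_inv_mul]

theorem ConvexOn.mul_apply_inv_add_smul_add_le {φ : E → ℝ} (hφ : ConvexOn ℝ Q φ) (hp : p ∈ Q)
    (hq : q ∈ Q) (ha : 0 ≤ a) (hb : 0 ≤ b) (hab : 0 < a + b) :
    (a + b) * φ ((a + b)⁻¹ • (a • p + b • q)) ≤ a * φ p + b * φ q := by
  have h := (convexOn_iff_div.1 hφ).2 hp hq ha hb hab
  simp only [smul_eq_mul, div_eq_inv_mul, ← smul_smul, ← smul_add] at h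
  rw [← le_div_iff₀' hab]
  linarith [show (a + b)⁻¹ * a * φ p + (a + b)⁻¹ * b * φ q = (a * φ p + b * φ q) / (a + b) by
    field_simp]

end ConvexCombination

theorem le_add_sum_range_of_succ_le_add {α : Type*} [AddCommGroup α] [PartialOrder α]
    [IsOrderedAddMonoid α] {Φ e : ℕ → α} {N : ℕ} (h : ∀ k < N, Φ (k + 1) ≤ Φ k + e k) :
    Φ N ≤ Φ 0 + ∑ k ∈ range N, e k := by
  induction N with
  | zero => simp
  | succ n ih =>
    rw [sum_range_succ, ← add_assoc]
    exact (h n n.lt_succ_self).trans (add_le_add_left (ih fun k hk => h k (by omega)) _)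

section Step

variable {E : Type*} [NormedAddCommGroup E] [InnerProductSpace ℝ E] {Q : Set E} {d : E → ℝ}
  {Dd : E → E}

theorem mul_half_norm_sq_sub_eq {A α A' β L : ℝ} {x u y x' u' : E} (hA' : A' ≠ 0)
    (hquad : A' * β = L * α ^ 2) (hy : y = A'⁻¹ • (α • u + A • x))
    (hx' : x' = A'⁻¹ • (α • u' + A • x)) :
    A' * (L / 2 * ‖x' - y‖ ^ 2) = β / 2 * ‖u' - u‖ ^ 2 := by
  have hdiff : x' - y = (A'⁻¹ * α) • (u' - u) := by rw [hx', hy]; module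
  rw [hdiff, norm_smul, Real.norm_eq_abs, mul_pow, sq_abs]
  field_simp
  linear_combination (-‖u' - u‖ ^ 2) * hquad

theorem potential_step_le [CompleteSpace E] (hQ : Convex ℝ Q)
    (hd : ∀ z ∈ Q, HasGradientAt d (Dd z) z)
    (hsc : ∀ a ∈ Q, ∀ b ∈ Q, 1 / 2 * ‖a - b‖ ^ 2 ≤ breg d Dd b a)
    {f ψ : E → ℝ} {μ m A α A' L δ δt c cp : ℝ} {x u y x' u' w : E}
    (hμ : 0 ≤ μ) (hm : 0 ≤ m) (hA : 0 ≤ A) (hα : 0 < α) (hA' : A' = A + α)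
    (hquad : A' * (1 + A * μ + A * m) = L * α ^ 2)
    (hy : y = A'⁻¹ • (α • u + A • x)) (hx' : x' = A'⁻¹ • (α • u' + A • x))
    (hxQ : x ∈ Q) (huQ : u ∈ Q) (hwQ : w ∈ Q)
    (hψ : ConvexOn ℝ Q ψ) (hψm : StrongRelConvexOn Q (breg d Dd) m ψ)
    (hmodel : ∀ w ∈ Q, μ * breg d Dd y w ≤ f w - c - ψ w)
    (hu' : IsApproxMinOn Q (fun w => α * ψ w + (1 + A * μ + A * m) * breg d Dd u w
      + α * μ * breg d Dd y w) δt u')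
    (hfx' : f x' ≤ cp + δ) (hcp : cp ≤ c + ψ x' + L / 2 * ‖x' - y‖ ^ 2 + δ) :
    A' * f x' + (1 + A' * μ + A' * m) * breg d Dd u' w
      ≤ α * f w + A * f x + (1 + A * μ + A * m) * breg d Dd u w + 2 * A' * δ + δt := by
  have hA'pos : 0 < A' := by linarith
  have hyQ : y ∈ Q := by
    rw [hy, hA', add_comm]
    exact hQ.inv_add_smul_add_mem huQ hxQ hα.le hA (by linarith)
  have hu'Q : u' ∈ Q := hu'.1
  have hψx' : A' * ψ x' ≤ α * ψ u' + A * ψ x := by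
    have := hψ.mul_apply_inv_add_smul_add_le hu'Q hxQ hα.le hA (by linarith)
    rwa [add_comm α A, ← hA', ← hx'] at this
  have hψx : A * ψ x ≤ A * (f x - c) :=
    mul_le_mul_of_nonneg_left (by nlinarith [hmodel x hxQ, breg_nonneg hsc hxQ hyQ]) hA
  have hψw : α * ψ w + α * μ * breg d Dd y w ≤ α * (f w - c) := by
    nlinarith [hmodel w hwQ, breg_nonneg hsc hwQ hyQ]
  have hyu' : 0 ≤ α * μ * breg d Dd y u' := by
    have := breg_nonneg hsc hu'Q hyQ
    positivity
  have hdist : A' * (L / 2 * ‖x' - y‖ ^ 2) ≤ (1 + A * μ + A * m) * breg d Dd u u' := by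
    rw [mul_half_norm_sq_sub_eq hA'pos.ne' hquad hy hx']
    have : 0 ≤ 1 + A * μ + A * m := by positivity
    nlinarith [hsc u' hu'Q u huQ]
  have haux := hu'.add_mul_le_add
    (strongRelConvexOn_mul_add_mul_breg_add_mul_breg hQ hd hψ hψm hα u y) w hwQ
  have hfx'_le : A' * f x' ≤ A' * (c + ψ x' + L / 2 * ‖x' - y‖ ^ 2 + 2 * δ) :=
    mul_le_mul_of_nonneg_left (by linarith) hA'pos.le
  subst hA'
  linarith

end Step

theorem stmt7_general
    {E : Type*} [NormedAddCommGroup E] [InnerProductSpace ℝ E] [FiniteDimensional ℝ E]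
    (Q : Set E) (hQ : Convex ℝ Q)
    (d : E → ℝ) (Dd : E → E)
    (hd_diff : ∀ x, HasGradientAt d (Dd x) x)
    (f : E → ℝ) (μ m : ℝ) (hμ : 0 ≤ μ) (hm : 0 ≤ m)
    (N : ℕ) (hN : 1 ≤ N)
    (x u y : ℕ → E) (A α L δs δts : ℕ → ℝ)
    (hxQ : ∀ k ≤ N, x k ∈ Q) (huQ : ∀ k ≤ N, u k ∈ Q)
    (hA0 : A 0 = 0)
    (hα : ∀ k < N, 0 < α (k + 1))
    (hArec : ∀ k < N, A (k + 1) = A k + α (k + 1))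
    (hquad : ∀ k < N, A (k + 1) * (1 + A k * μ + A k * m) = L (k + 1) * α (k + 1) ^ 2)
    (hy : ∀ k < N, y (k + 1) = (A (k + 1))⁻¹ • (α (k + 1) • u k + A k • x k))
    (hx : ∀ k < N, x (k + 1) = (A (k + 1))⁻¹ • (α (k + 1) • u (k + 1) + A k • x k))
    (hsc : ∀ a ∈ Q, ∀ b ∈ Q, 1 / 2 * ‖a - b‖ ^ 2 ≤ breg d Dd b a)
    (hmodel : ∀ k < N, ∃ (ψ : E → ℝ) (c cp : ℝ),
      ConvexOn ℝ Q ψ ∧ ψ (y (k + 1)) = 0 ∧ StrongRelConvexOn Q (breg d Dd) m ψ ∧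
      (∀ w ∈ Q, μ * breg d Dd (y (k + 1)) w ≤ f w - c - ψ w) ∧
      IsApproxMinOn Q
        (fun w => α (k + 1) * ψ w + (1 + A k * μ + A k * m) * breg d Dd (u k) w
          + α (k + 1) * μ * breg d Dd (y (k + 1)) w) (δts k) (u (k + 1)) ∧
      f (x (k + 1)) ≤ cp + δs k ∧
      cp ≤ c + ψ (x (k + 1)) + L (k + 1) / 2 * ‖x (k + 1) - y (k + 1)‖ ^ 2 + δs k)
    (xs : E) (hxs : xs ∈ Q) (hmin : ∀ w ∈ Q, f xs ≤ f w) :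
    (f (x N) - f xs ≤
        breg d Dd (u 0) xs / A N
          + (2 * ∑ k ∈ Finset.range N, A (k + 1) * δs k) / A N
          + (∑ k ∈ Finset.range N, δts k) / A N) ∧
    breg d Dd (u N) xs ≤
      (breg d Dd (u 0) xs + 2 * ∑ k ∈ Finset.range N, A (k + 1) * δs k
          + ∑ k ∈ Finset.range N, δts k) / (1 + A N * μ + A N * m) := by
  have hA : ∀ k ≤ N, 0 ≤ A k := by
    intro k
    induction k with
    | zero => simp [hA0]
    | succ k ih => intro hk; rw [hArec k hk]; linarith [ih (by omega), hα k hk]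
  set Φ : ℕ → ℝ := fun k =>
    A k * (f (x k) - f xs) + (1 + A k * μ + A k * m) * breg d Dd (u k) xs with hΦ
  have hstep : ∀ k < N, Φ (k + 1) ≤ Φ k + (2 * A (k + 1) * δs k + δts k) := by
    intro k hk
    obtain ⟨ψ, c, cp, hψ, -, hψm, hmod, hu', hfx, hcp⟩ := hmodel k hk
    have := potential_step_le hQ (fun z _ => hd_diff z) hsc hμ hm (hA k hk.le) (hα k hk)
      (hArec k hk) (hquad k hk) (hy k hk) (hx k hk) (hxQ k hk.le) (huQ k hk.le) hxs hψ hψm hmod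
      hu' hfx hcp
    linear_combination this - f xs * hArec k hk
  have htele := le_add_sum_range_of_succ_le_add hstep
  simp only [hΦ, hA0, zero_mul, add_zero, zero_add, one_mul, sum_add_distrib, mul_assoc,
    ← mul_sum] at htele
  have hAN : 0 < A N := by
    obtain ⟨n, rfl⟩ := Nat.exists_eq_add_of_le' hN
    linarith [hArec n (by omega), hA n (by omega), hα n (by omega)]
  have hγN : 0 < 1 + A N * μ + A N * m := by have := hA N le_rfl; positivity
  have hgap : 0 ≤ f (x N) - f xs := sub_nonneg.2 (hmin _ (hxQ N le_rfl))
  have hVN := breg_nonneg hsc hxs (huQ N le_rfl)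
  constructor
  · rw [← add_div, ← add_div, le_div_iff₀ hAN]
    nlinarith
  · rw [le_div_iff₀ hγN]
    nlinarith

/-- Theorem 3.4: convergence rates of the fast adaptive gradient method with
an inexact `(δ, L, μ, m, V, ‖·‖)`-model, both for the objective and the argument. -/
theorem stmt7
    {E : Type*} [NormedAddCommGroup E] [InnerProductSpace ℝ E] [FiniteDimensional ℝ E]
    (Q : Set E) (hQ : Convex ℝ Q)
    (d : E → ℝ) (Dd : E → E)
    (hd_conv : ConvexOn ℝ Set.univ d) (hd_diff : ∀ x, HasGradientAt d (Dd x) x)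
    (f : E → ℝ) (μ m : ℝ) (hμ : 0 ≤ μ) (hm : 0 ≤ m)
    (N : ℕ) (hN : 1 ≤ N)
    (x u y : ℕ → E) (A α L δs δts : ℕ → ℝ)
    (hxQ : ∀ k ≤ N, x k ∈ Q) (huQ : ∀ k ≤ N, u k ∈ Q)
    (hA0 : A 0 = 0) (hu0 : u 0 = x 0)
    (hδs : ∀ k < N, 0 ≤ δs k) (hδts : ∀ k < N, 0 ≤ δts k)
    (hα : ∀ k < N, 0 < α (k + 1))
    (hArec : ∀ k < N, A (k + 1) = A k + α (k + 1))
    (hL : ∀ k < N, 0 < L (k + 1))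
    (hquad : ∀ k < N, A (k + 1) * (1 + A k * μ + A k * m) = L (k + 1) * α (k + 1) ^ 2)
    (hy : ∀ k < N, y (k + 1) = (A (k + 1))⁻¹ • (α (k + 1) • u k + A k • x k))
    (hx : ∀ k < N, x (k + 1) = (A (k + 1))⁻¹ • (α (k + 1) • u (k + 1) + A k • x k))
    (hsc : ∀ a ∈ Q, ∀ b ∈ Q, 1 / 2 * ‖a - b‖ ^ 2 ≤ breg d Dd b a)
    (hmodel : ∀ k < N, ∃ (ψ : E → ℝ) (c cp : ℝ),
      ConvexOn ℝ Q ψ ∧ ψ (y (k + 1)) = 0 ∧ StrongRelConvexOn Q (breg d Dd) m ψ ∧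
      (∀ w ∈ Q, μ * breg d Dd (y (k + 1)) w ≤ f w - c - ψ w) ∧
      IsApproxMinOn Q
        (fun w => α (k + 1) * ψ w + (1 + A k * μ + A k * m) * breg d Dd (u k) w
          + α (k + 1) * μ * breg d Dd (y (k + 1)) w) (δts k) (u (k + 1)) ∧
      f (x (k + 1)) ≤ cp + δs k ∧
      cp ≤ c + ψ (x (k + 1)) + L (k + 1) / 2 * ‖x (k + 1) - y (k + 1)‖ ^ 2 + δs k)
    (xs : E) (hxs : xs ∈ Q) (hmin : ∀ w ∈ Q, f xs ≤ f w) :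
    (f (x N) - f xs ≤
        breg d Dd (u 0) xs / A N
          + (2 * ∑ k ∈ Finset.range N, A (k + 1) * δs k) / A N
          + (∑ k ∈ Finset.range N, δts k) / A N) ∧
    breg d Dd (u N) xs ≤
      (breg d Dd (u 0) xs + 2 * ∑ k ∈ Finset.range N, A (k + 1) * δs k
          + ∑ k ∈ Finset.range N, δts k) / (1 + A N * μ + A N * m) :=
  stmt7_general Q hQ d Dd hd_diff f μ m hμ hm N hN x u y A α L δs δts hxQ huQ hA0 hα hArec hquad hy
    hx hsc hmodel xs hxs hmin
end

section
/- Let μ, m ≥ 0 and L_k > 0 for k ≥ 1. Define A₀ := 0 and, for each k ≥ 0, let α_{k+1} be the largest root of the quadratic equation L_{k+1}·α² = (A_k + α)·(1 + A_k·μ + A_k·m) and set A_{k+1} := A_k + α_{k+1}. Then for all N ≥ 1: A_N ≥ (1/4)·(∑_{k=0}^{N−1} 1/√(L_{k+1}))² and A_N ≥ (1/L₁)·∏_{k=1}^{N−1} (1 + √((μ + m)/(4·L_{k+1})))². -/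
set_option maxHeartbeats 1600000 in
/-- Lemma 3.8: lower bound on the growth of the sequence `A_N` generated by
the step-size rule of the fast adaptive gradient method. -/
theorem stmt8
    (μ m : ℝ) (hμ : 0 ≤ μ) (hm : 0 ≤ m)
    (L A α : ℕ → ℝ) (hL : ∀ k, 1 ≤ k → 0 < L k)
    (hA0 : A 0 = 0)
    (hαpos : ∀ k, 0 < α (k + 1))
    (hroot : ∀ k, L (k + 1) * α (k + 1) ^ 2 = (A k + α (k + 1)) * (1 + A k * μ + A k * m))
    (hlargest : ∀ k, ∀ β : ℝ,
      L (k + 1) * β ^ 2 = (A k + β) * (1 + A k * μ + A k * m) → β ≤ α (k + 1))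
    (hArec : ∀ k, A (k + 1) = A k + α (k + 1)) :
    ∀ N : ℕ, 1 ≤ N →
      1 / 4 * (∑ k ∈ Finset.range N, 1 / Real.sqrt (L (k + 1))) ^ 2 ≤ A N ∧
      1 / L 1 * ∏ k ∈ Finset.Ico 1 N, (1 + Real.sqrt ((μ + m) / (4 * L (k + 1)))) ^ 2 ≤ A N := by
  have hAnn : ∀ k, 0 ≤ A k := by
    intro k
    induction k with
    | zero => simp [hA0]
    | succ n ih => rw [hArec]; have := hαpos n; linarith
  have hL1 : 0 < L 1 := hL 1 le_rfl
  have hα1 : α 1 = 1 / L 1 := by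
    have h := hroot 0
    rw [hA0] at h
    have hp := hαpos 0
    have h2 : L 1 * α 1 = 1 := by
      have h3 : (L 1 * α 1) * α 1 = 1 * α 1 := by
        simp only [zero_add] at h ⊢
        nlinarith [h]
      exact mul_right_cancel₀ (ne_of_gt hp) h3
    field_simp
    linarith
  have hA1 : A 1 = 1 / L 1 := by
    have := hArec 0
    rw [hA0, hα1] at this
    simpa using this
  -- Claim 1: sqrt growth
  have claim1 : ∀ k, Real.sqrt (A k) + 1 / (2 * Real.sqrt (L (k + 1))) ≤ Real.sqrt (A (k + 1)) := by
    intro k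
    have hL' : 0 < L (k + 1) := hL (k + 1) (Nat.le_add_left 1 k)
    have ht : 0 < α (k + 1) := hαpos k
    have ha : 0 ≤ A k := hAnn k
    set a := A k with haa
    set t := α (k + 1) with htt
    set u := Real.sqrt (a + t) with hu
    set v := Real.sqrt a with hv
    set w := Real.sqrt (L (k + 1)) with hw
    have hwpos : 0 < w := Real.sqrt_pos.mpr hL'
    have hu2 : u ^ 2 = a + t := Real.sq_sqrt (by linarith)
    have hv2 : v ^ 2 = a := Real.sq_sqrt ha
    have hw2 : w ^ 2 = L (k + 1) := Real.sq_sqrt hL'.le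
    have hupos : 0 < u := Real.sqrt_pos.mpr (by linarith)
    have hvnn : 0 ≤ v := Real.sqrt_nonneg a
    have hkey : u ≤ w * t := by
      have h := hroot k
      have hc1 : 0 ≤ a * μ := mul_nonneg ha hμ
      have hc2 : 0 ≤ a * m := mul_nonneg ha hm
      have h1 : a + t ≤ (w * t) ^ 2 := by nlinarith [h]
      calc u = Real.sqrt (a + t) := hu
        _ ≤ Real.sqrt ((w * t) ^ 2) := Real.sqrt_le_sqrt h1
        _ = w * t := Real.sqrt_sq (by positivity)
    have huv : v ≤ u := by
      apply Real.sqrt_le_sqrt; linarith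
    have h4 : (u - v) * (u + v) = t := by nlinarith [hu2, hv2]
    have h5 : u + v ≤ 2 * (w * t) := by linarith
    have h6 : 0 < u + v := by linarith
    have h3 : 1 ≤ 2 * w * (u - v) := by nlinarith [h4, h5, h6]
    have h7 : A (k + 1) = a + t := hArec k
    rw [h7, ← hu]
    have h8 : 1 / (2 * w) ≤ u - v := by
      rw [div_le_iff₀ (by positivity)]
      nlinarith [h3]
    linarith
  -- sum bound by induction
  have hsum : ∀ N, (1 : ℝ) / 2 * ∑ k ∈ Finset.range N, 1 / Real.sqrt (L (k + 1)) ≤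
      Real.sqrt (A N) := by
    intro N
    induction N with
    | zero => simp [hA0]
    | succ n ih =>
      rw [Finset.sum_range_succ]
      have h1 := claim1 n
      have h2 : (1 : ℝ) / (2 * Real.sqrt (L (n + 1))) = 1 / 2 * (1 / Real.sqrt (L (n + 1))) := by
        ring
      rw [h2] at h1
      linarith
  -- Claim 2: multiplicative growth
  have claim2 : ∀ k, A k * (1 + Real.sqrt ((μ + m) / (4 * L (k + 1)))) ^ 2 ≤ A (k + 1) := by
    intro k
    have hL' : 0 < L (k + 1) := hL (k + 1) (Nat.le_add_left 1 k)
    have ht : 0 < α (k + 1) := hαpos k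
    have ha : 0 ≤ A k := hAnn k
    set a := A k with haa
    set t := α (k + 1) with htt
    set q := Real.sqrt ((μ + m) / (4 * L (k + 1))) with hq
    have hqnn : 0 ≤ q := Real.sqrt_nonneg _
    have hq2 : q ^ 2 = (μ + m) / (4 * L (k + 1)) := Real.sq_sqrt (by positivity)
    have hmm : μ + m = 4 * L (k + 1) * q ^ 2 := by
      rw [hq2]; field_simp
    have h := hroot k
    have hc : a * μ + a * m ≤ 1 + a * μ + a * m := by linarith
    have h1 : (a + t) * (a * μ + a * m) ≤ L (k + 1) * t ^ 2 := by
      have h0 := mul_le_mul_of_nonneg_left hc (show (0:ℝ) ≤ a + t by linarith)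
      linarith [h]
    have hs : a * μ + a * m = 4 * L (k + 1) * q ^ 2 * a := by
      rw [show a * μ + a * m = a * (μ + m) by ring, hmm]; ring
    have h2 : 4 * (a + t) * a * q ^ 2 ≤ t ^ 2 := by
      have h3 : L (k + 1) * (4 * (a + t) * a * q ^ 2) ≤ L (k + 1) * t ^ 2 := by
        calc L (k + 1) * (4 * (a + t) * a * q ^ 2)
            = (a + t) * (4 * L (k + 1) * q ^ 2 * a) := by ring
          _ = (a + t) * (a * μ + a * m) := by rw [← hs]
          _ ≤ L (k + 1) * t ^ 2 := h1
      exact le_of_mul_le_mul_left h3 hL'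
    have he : 4 * (a + t) * a * q ^ 2 = 4 * a ^ 2 * q ^ 2 + 4 * t * a * q ^ 2 := by ring
    have hnn1 : 0 ≤ 4 * t * a * q ^ 2 := by positivity
    have h4 : 2 * a * q ≤ t := by
      have hsq : (2 * a * q) ^ 2 ≤ t ^ 2 := by
        have e : (2 * a * q) ^ 2 = 4 * a ^ 2 * q ^ 2 := by ring
        linarith [h2, he, hnn1, e]
      calc 2 * a * q = Real.sqrt ((2 * a * q) ^ 2) := (Real.sqrt_sq (by positivity)).symm
        _ ≤ Real.sqrt (t ^ 2) := Real.sqrt_le_sqrt hsq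
        _ = t := Real.sqrt_sq ht.le
    have h5 : 2 * a * q ^ 2 ≤ t - 2 * a * q := by
      have e1 : (t - 2 * a * q) * (t + 2 * a * q) = t ^ 2 - 4 * a ^ 2 * q ^ 2 := by ring
      have e2 : 4 * t * a * q ^ 2 ≤ (t - 2 * a * q) * (t + 2 * a * q) := by
        rw [e1]; linarith [h2, he]
      have e3 : (t - 2 * a * q) * (t + 2 * a * q) ≤ (t - 2 * a * q) * (2 * t) :=
        mul_le_mul_of_nonneg_left (by linarith) (by linarith)
      have e5 : (2 * a * q ^ 2) * (2 * t) ≤ (t - 2 * a * q) * (2 * t) := by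
        calc (2 * a * q ^ 2) * (2 * t) = 4 * t * a * q ^ 2 := by ring
          _ ≤ (t - 2 * a * q) * (t + 2 * a * q) := e2
          _ ≤ (t - 2 * a * q) * (2 * t) := e3
      exact le_of_mul_le_mul_right e5 (by linarith)
    rw [hArec]
    have e6 : a * (1 + q) ^ 2 = a + 2 * a * q + a * q ^ 2 := by ring
    have hnn2 : 0 ≤ a * q ^ 2 := by positivity
    linarith [h4, h5, e6, hnn2]
  -- product bound by induction
  have hprod : ∀ N, 1 ≤ N →
      1 / L 1 * ∏ k ∈ Finset.Ico 1 N, (1 + Real.sqrt ((μ + m) / (4 * L (k + 1)))) ^ 2 ≤ A N := by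
    intro N
    induction N with
    | zero => omega
    | succ n ih =>
      intro hN
      rcases Nat.lt_or_ge n 1 with h1 | h1
      · obtain rfl : n = 0 := by omega
        simp [hA1]
      · rw [Finset.prod_Ico_succ_top h1]
        have ih' := ih h1
        have hc2 := claim2 n
        have hterm : 0 ≤ (1 + Real.sqrt ((μ + m) / (4 * L (n + 1)))) ^ 2 := sq_nonneg _
        calc 1 / L 1 * ((∏ k ∈ Finset.Ico 1 n, (1 + Real.sqrt ((μ + m) / (4 * L (k + 1)))) ^ 2) *
              (1 + Real.sqrt ((μ + m) / (4 * L (n + 1)))) ^ 2)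
            = (1 / L 1 * ∏ k ∈ Finset.Ico 1 n, (1 + Real.sqrt ((μ + m) / (4 * L (k + 1)))) ^ 2) *
              (1 + Real.sqrt ((μ + m) / (4 * L (n + 1)))) ^ 2 := by ring
          _ ≤ A n * (1 + Real.sqrt ((μ + m) / (4 * L (n + 1)))) ^ 2 :=
              mul_le_mul_of_nonneg_right ih' hterm
          _ ≤ A (n + 1) := hc2
  intro N hN
  constructor
  · have hS : 0 ≤ ∑ k ∈ Finset.range N, 1 / Real.sqrt (L (k + 1)) :=
      Finset.sum_nonneg fun k _ => by positivity
    have h := hsum N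
    nlinarith [Real.sq_sqrt (hAnn N), Real.sqrt_nonneg (A N), h, hS]
  · exact hprod N hN
end

section
/- Let μ, m ≥ 0, L > 0 with μ + m ≤ 4·L, and let L_k > 0 satisfy L_k ≤ 2·L for all k ≥ 1. Define A₀ := 0 and, for each k ≥ 0, let α_{k+1} be the largest root of L_{k+1}·α² = (A_k + α)·(1 + A_k·μ + A_k·m) and A_{k+1} := A_k + α_{k+1}. Then for all N ≥ 1: A_N ≥ N²/(8·L) and A_N ≥ (1/(2·L))·(1 + (1/4)·√((μ + m)/L))^{2(N−1)} ≥ (1/(2·L))·exp(((N−1)/4)·√((μ + m)/L)). -/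
set_option maxHeartbeats 1000000 in
/-- Remark 3.5: lower bound on the growth of the sequence `A_N` generated by
the step-size rule of the fast adaptive gradient method when `L_k ≤ 2L`. -/
theorem stmt9
    (μ m Lb : ℝ) (hμ : 0 ≤ μ) (hm : 0 ≤ m) (hLb : 0 < Lb) (hμm : μ + m ≤ 4 * Lb)
    (L A α : ℕ → ℝ)
    (hL : ∀ k, 1 ≤ k → 0 < L k) (hLle : ∀ k, 1 ≤ k → L k ≤ 2 * Lb)
    (hA0 : A 0 = 0)
    (hαpos : ∀ k, 0 < α (k + 1))
    (hroot : ∀ k, L (k + 1) * α (k + 1) ^ 2 = (A k + α (k + 1)) * (1 + A k * μ + A k * m))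
    (hlargest : ∀ k, ∀ β : ℝ,
      L (k + 1) * β ^ 2 = (A k + β) * (1 + A k * μ + A k * m) → β ≤ α (k + 1))
    (hArec : ∀ k, A (k + 1) = A k + α (k + 1)) :
    ∀ N : ℕ, 1 ≤ N →
      (N : ℝ) ^ 2 / (8 * Lb) ≤ A N ∧
      1 / (2 * Lb) * (1 + 1 / 4 * Real.sqrt ((μ + m) / Lb)) ^ (2 * (N - 1)) ≤ A N ∧
      1 / (2 * Lb) * Real.exp (((N : ℝ) - 1) / 4 * Real.sqrt ((μ + m) / Lb)) ≤
        1 / (2 * Lb) * (1 + 1 / 4 * Real.sqrt ((μ + m) / Lb)) ^ (2 * (N - 1)) := by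
  intro N hN
  set s := Real.sqrt (2 * Lb) with hs_def
  have hs2 : s ^ 2 = 2 * Lb := Real.sq_sqrt (by positivity)
  have hs_pos : 0 < s := Real.sqrt_pos.mpr (by positivity)
  set u := Real.sqrt ((μ + m) / Lb) with hu_def
  have hu2 : u ^ 2 = (μ + m) / Lb := Real.sq_sqrt (by positivity)
  have hu_nonneg : 0 ≤ u := Real.sqrt_nonneg _
  have hu_le : u ≤ 2 := by
    rw [hu_def, show (2:ℝ) = Real.sqrt 4 by
      rw [show (4:ℝ) = 2 ^ 2 by norm_num, Real.sqrt_sq (by norm_num : (0:ℝ) ≤ 2)]]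
    apply Real.sqrt_le_sqrt
    rw [div_le_iff₀ hLb]; linarith
  have hA1 : A 1 = α 1 := by rw [hArec 0, hA0, zero_add]
  have hα1 : L 1 * α 1 = 1 := by
    have h := hroot 0
    rw [hA0] at h
    simp only [zero_add, zero_mul, add_zero] at h
    have h' : α 1 * (L 1 * α 1 - 1) = 0 := by linear_combination h
    rcases mul_eq_zero.1 h' with h0 | h0
    · exact absurd h0 (ne_of_gt (hαpos 0))
    · linarith
  have hA1ge : 1 / (2 * Lb) ≤ A 1 := by
    rw [hA1, div_le_iff₀ (by positivity)]
    have hL1 := hL 1 le_rfl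
    have hL1le := hLle 1 le_rfl
    nlinarith [hαpos 0]
  have hApos : ∀ k, 1 ≤ k → 0 < A k := by
    intro k hk
    induction k, hk using Nat.le_induction with
    | base => rw [hA1]; exact hαpos 0
    | succ n hn ih => rw [hArec n]; exact add_pos ih (hαpos n)
  -- the two key step inequalities
  have step : ∀ k, 1 ≤ k →
      Real.sqrt (A k) + 1 / (2 * s) ≤ Real.sqrt (A (k + 1)) ∧
      Real.sqrt (A k) * (1 + 1 / 4 * u) ≤ Real.sqrt (A (k + 1)) := by
    intro k hk
    have hAk := hApos k hk
    have hαk := hαpos k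
    have hAk1 : A (k + 1) = A k + α (k + 1) := hArec k
    set a := Real.sqrt (A k) with ha_def
    set b := Real.sqrt (A (k + 1)) with hb_def
    have ha_pos : 0 < a := Real.sqrt_pos.mpr hAk
    have hAk1pos : 0 < A (k + 1) := by rw [hAk1]; linarith
    have hb_pos : 0 < b := Real.sqrt_pos.mpr hAk1pos
    have ha2 : a ^ 2 = A k := Real.sq_sqrt hAk.le
    have hb2 : b ^ 2 = A (k + 1) := Real.sq_sqrt hAk1pos.le
    have hab : a ≤ b := Real.sqrt_le_sqrt (by rw [hAk1]; linarith)
    have hLk := hL (k + 1) (by omega)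
    have hLkle := hLle (k + 1) (by omega)
    have key : (A k + α (k + 1)) * (1 + A k * μ + A k * m) ≤ 2 * Lb * α (k + 1) ^ 2 := by
      rw [← hroot k]
      nlinarith [sq_nonneg (α (k + 1))]
    have hq : 0 ≤ A k * μ + A k * m := by positivity
    -- ineq 1 : b ≤ s * α
    have i1 : b ≤ s * α (k + 1) := by
      have h1 : b ^ 2 ≤ (s * α (k + 1)) ^ 2 := by
        have e : (s * α (k + 1)) ^ 2 = 2 * Lb * α (k + 1) ^ 2 := by
          rw [mul_pow, hs2]
        rw [e, hb2, hAk1]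
        nlinarith [key, mul_nonneg (by linarith : (0:ℝ) ≤ A k + α (k + 1)) hq]
      have := Real.sqrt_le_sqrt h1
      rwa [Real.sqrt_sq hb_pos.le, Real.sqrt_sq (by positivity)] at this
    -- ineq 2 : a * b * u ≤ 2 * α
    have i2 : a * b * u ≤ 2 * α (k + 1) := by
      have hc : A k * A (k + 1) * (μ + m) ≤ 2 * Lb * α (k + 1) ^ 2 := by
        rw [hAk1]
        nlinarith [key, hAk, hαk]
      have h1 : (a * b * u) ^ 2 ≤ (2 * α (k + 1)) ^ 2 := by
        have e : (a * b * u) ^ 2 = A k * A (k + 1) * ((μ + m) / Lb) := by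
          rw [mul_pow, mul_pow, ha2, hb2, hu2]
        rw [e]
        have e2 : A k * A (k + 1) * ((μ + m) / Lb) = A k * A (k + 1) * (μ + m) / Lb := by
          ring
        rw [e2, div_le_iff₀ hLb]
        nlinarith [hc, mul_nonneg hLb.le (sq_nonneg (α (k + 1)))]
      have := Real.sqrt_le_sqrt h1
      rwa [Real.sqrt_sq (by positivity), Real.sqrt_sq (by positivity)] at this
    have hα_eq : α (k + 1) = b ^ 2 - a ^ 2 := by rw [ha2, hb2, hAk1]; ring
    constructor
    · -- a + 1/(2s) ≤ b
      rw [← sub_nonneg]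
      have h2s : (0:ℝ) < 2 * s := by positivity
      have key2 : 1 ≤ (b - a) * (2 * s) := by
        rw [hα_eq] at i1
        nlinarith [mul_nonneg (mul_nonneg hs_pos.le (sub_nonneg.2 hab)) (sub_nonneg.2 hab),
          hb_pos, ha_pos]
      have : 1 / (2 * s) ≤ b - a := by
        rw [div_le_iff₀ h2s]; linarith
      linarith
    · -- a * (1 + u/4) ≤ b
      rw [hα_eq] at i2
      nlinarith [mul_nonneg (mul_nonneg ha_pos.le hu_nonneg) (sub_nonneg.2 hab),
        ha_pos, hb_pos, hab]
  -- main induction on sqrt A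
  have main : ∀ M : ℕ, 1 ≤ M →
      ((M : ℝ) + 1) / (2 * s) ≤ Real.sqrt (A M) ∧
      1 / s * (1 + 1 / 4 * u) ^ (M - 1) ≤ Real.sqrt (A M) := by
    intro M hM
    induction M, hM using Nat.le_induction with
    | base =>
      have h1 : 1 / s ≤ Real.sqrt (A 1) := by
        have h := Real.sqrt_le_sqrt hA1ge
        rwa [show (1:ℝ) / (2 * Lb) = (1 / s) ^ 2 by rw [div_pow, one_pow, hs2],
          Real.sqrt_sq (by positivity)] at h
      constructor
      · have e : (((1:ℕ) : ℝ) + 1) / (2 * s) = 1 / s := by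
          push_cast
          rw [div_eq_div_iff (by positivity) (by positivity)]
          ring
        rw [e]; exact h1
      · simpa using h1
    | succ n hn ih =>
      obtain ⟨st1, st2⟩ := step n hn
      obtain ⟨ih1, ih2⟩ := ih
      constructor
      · have e : (((n + 1 : ℕ) : ℝ) + 1) / (2 * s) =
            (((n : ℕ) : ℝ) + 1) / (2 * s) + 1 / (2 * s) := by push_cast; ring
        rw [e]
        linarith
      · have hpow : (n + 1) - 1 = (n - 1) + 1 := by omega
        rw [hpow, pow_succ]
        have ht1 : (0:ℝ) ≤ 1 + 1 / 4 * u := by linarith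
        calc 1 / s * ((1 + 1 / 4 * u) ^ (n - 1) * (1 + 1 / 4 * u))
            = (1 / s * (1 + 1 / 4 * u) ^ (n - 1)) * (1 + 1 / 4 * u) := by ring
          _ ≤ Real.sqrt (A n) * (1 + 1 / 4 * u) := mul_le_mul_of_nonneg_right ih2 ht1
          _ ≤ Real.sqrt (A (n + 1)) := st2
  obtain ⟨m1, m2⟩ := main N hN
  have hANpos := hApos N hN
  have hAN_sq : Real.sqrt (A N) ^ 2 = A N := Real.sq_sqrt hANpos.le
  refine ⟨?_, ?_, ?_⟩
  · -- N^2 / (8 Lb) ≤ A N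
    have h := pow_le_pow_left₀ (by positivity) m1 2
    rw [hAN_sq] at h
    have e : (((N : ℝ) + 1) / (2 * s)) ^ 2 = ((N : ℝ) + 1) ^ 2 / (8 * Lb) := by
      rw [div_pow, mul_pow, hs2]; ring
    rw [e] at h
    have h2 : (N : ℝ) ^ 2 / (8 * Lb) ≤ ((N : ℝ) + 1) ^ 2 / (8 * Lb) := by
      have hN0 : (0:ℝ) ≤ (N : ℝ) := Nat.cast_nonneg N
      gcongr
      linarith
    linarith
  · have h := pow_le_pow_left₀ (by positivity) m2 2
    rw [hAN_sq] at h
    have e : (1 / s * (1 + 1 / 4 * u) ^ (N - 1)) ^ 2 =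
        1 / (2 * Lb) * (1 + 1 / 4 * u) ^ (2 * (N - 1)) := by
      rw [mul_pow, div_pow, one_pow, hs2, ← pow_mul, Nat.mul_comm]
    rw [e] at h
    exact h
  · -- exp bound
    set x := 1 / 4 * u with hx_def
    have hx0 : 0 ≤ x := by positivity
    have hx12 : x ≤ 1 / 2 := by rw [hx_def]; linarith
    apply mul_le_mul_of_nonneg_left ?_ (by positivity)
    have hcast : ((N : ℝ) - 1) = ((N - 1 : ℕ) : ℝ) := by
      have := Nat.cast_sub hN (R := ℝ)
      rw [this]; norm_num
    have e1 : ((N : ℝ) - 1) / 4 * u = ((N - 1 : ℕ) : ℝ) * x := by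
      rw [hcast, hx_def]; ring
    rw [e1, Real.exp_nat_mul, pow_mul]
    apply pow_le_pow_left₀ (Real.exp_nonneg _)
    -- exp x ≤ (1 + x)^2
    have hE : (1 - x / 2) * Real.exp (x / 2) ≤ 1 := by
      have h := Real.add_one_le_exp (-(x / 2))
      have hpos := Real.exp_pos (x / 2)
      have : (1 - x / 2) * Real.exp (x / 2) ≤ Real.exp (-(x / 2)) * Real.exp (x / 2) := by
        apply mul_le_mul_of_nonneg_right (by linarith) hpos.le
      rwa [← Real.exp_add, neg_add_cancel, Real.exp_zero] at this
    have h1 : Real.exp (x / 2) ≤ 1 + x := by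
      nlinarith [Real.exp_pos (x / 2), hE, hx0, hx12]
    have e2 : Real.exp x = Real.exp (x / 2) ^ 2 := by
      rw [sq, ← Real.exp_add]; ring_nf
    rw [e2]
    exact pow_le_pow_left₀ (Real.exp_nonneg _) h1 2
end
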